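/- arXiv:2411.08999 — 2 statements merged into one kernel-verified Lean document; each statement's English description precedes it below -/
import Mathlib

section
/- For two rectangles (as compact convex sets in ℝ²), they are disjoint if and only if there exists an axis among the 4 axes given by the edge normals of the two rectangles on which their projections do not overlap. -/
open RealInnerProductSpace

/-- Unit vector in direction ψ. -/
noncomputable def dir (ψ : ℝ) : EuclideanSpace ℝ (Fin 2) :=
  WithLp.toLp 2 ![Real.cos ψ, Real.sin ψ]

/-- Rotation by ψ in ℝ². -/
noncomputable def rot2 (ψ : ℝ) (p : EuclideanSpace ℝ (Fin 2)) : EuclideanSpace ℝ (Fin 2) :=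
  WithLp.toLp 2 ![Real.cos ψ * p 0 - Real.sin ψ * p 1, Real.sin ψ * p 0 + Real.cos ψ * p 1]

/-- A rectangle: the image of `[0,a] × [0,b]` under the rigid motion
`p ↦ rot ψ p + c` (rotation by ψ followed by translation by c). -/
noncomputable def rect (a b ψ : ℝ) (c : EuclideanSpace ℝ (Fin 2)) :
    Set (EuclideanSpace ℝ (Fin 2)) :=
  (fun p => rot2 ψ p + c) '' {p | p 0 ∈ Set.Icc 0 a ∧ p 1 ∈ Set.Icc 0 b}

lemma inner2 (x y : EuclideanSpace ℝ (Fin 2)) : ⟪x, y⟫ = x 0 * y 0 + x 1 * y 1 := by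
  simp [PiLp.inner_apply, Fin.sum_univ_two, RCLike.inner_apply, mul_comm]

lemma inner_dir (φ χ : ℝ) : ⟪dir φ, dir χ⟫ = Real.cos (φ - χ) := by
  rw [inner2]; simp [dir, Real.cos_sub]

lemma dir_expand (ψ : ℝ) (w : EuclideanSpace ℝ (Fin 2)) :
    w = ⟪w, dir ψ⟫ • dir ψ + ⟪w, dir (ψ + Real.pi/2)⟫ • dir (ψ + Real.pi/2) := by
  ext i
  fin_cases i
  · simp [inner2, dir, Real.cos_add, Real.sin_add]
    linear_combination (-(w 0)) * (Real.sin_sq_add_cos_sq ψ)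
  · simp [inner2, dir, Real.cos_add, Real.sin_add]
    linear_combination (-(w 1)) * (Real.sin_sq_add_cos_sq ψ)


lemma mem_rect {a b ψ : ℝ} {c x : EuclideanSpace ℝ (Fin 2)} :
    x ∈ rect a b ψ c ↔ ∃ s t : ℝ, (s ∈ Set.Icc 0 a ∧ t ∈ Set.Icc 0 b) ∧
      x = s • dir ψ + t • dir (ψ + Real.pi/2) + c := by
  constructor
  · rintro ⟨p, ⟨h0, h1⟩, rfl⟩
    refine ⟨p 0, p 1, ⟨h0, h1⟩, ?_⟩
    have : rot2 ψ p = p 0 • dir ψ + p 1 • dir (ψ + Real.pi/2) := by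
      ext i; fin_cases i <;>
        simp [rot2, dir, Real.cos_add, Real.sin_add] <;> ring
    show rot2 ψ p + c = _
    rw [this]
  · rintro ⟨s, t, ⟨hs, ht⟩, rfl⟩
    refine ⟨WithLp.toLp 2 ![s, t], ⟨by simpa using hs, by simpa using ht⟩, ?_⟩
    have : rot2 ψ (WithLp.toLp 2 ![s, t]) = s • dir ψ + t • dir (ψ + Real.pi/2) := by
      ext i; fin_cases i <;>
        simp [rot2, dir, Real.cos_add, Real.sin_add] <;> ring
    show rot2 ψ (WithLp.toLp 2 ![s, t]) + c = _
    rw [this]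

lemma rect_eq_image (a b ψ : ℝ) (c : EuclideanSpace ℝ (Fin 2)) :
    rect a b ψ c = (fun st : ℝ × ℝ => st.1 • dir ψ + st.2 • dir (ψ + Real.pi/2) + c) ''
      (Set.Icc 0 a ×ˢ Set.Icc 0 b) := by
  ext x
  rw [mem_rect]
  constructor
  · rintro ⟨s, t, ⟨hs, ht⟩, rfl⟩; exact ⟨(s, t), ⟨hs, ht⟩, rfl⟩
  · rintro ⟨⟨s, t⟩, ⟨hs, ht⟩, rfl⟩; exact ⟨s, t, ⟨hs, ht⟩, rfl⟩

lemma isCompact_rect (a b ψ : ℝ) (c : EuclideanSpace ℝ (Fin 2)) :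
    IsCompact (rect a b ψ c) := by
  rw [rect_eq_image]
  exact ((isCompact_Icc.prod isCompact_Icc)).image (by fun_prop)

lemma convex_rect (a b ψ : ℝ) (c : EuclideanSpace ℝ (Fin 2)) :
    Convex ℝ (rect a b ψ c) := by
  intro z₁ hz₁ z₂ hz₂ k l hk hl hkl
  obtain ⟨s₁, t₁, ⟨hs₁, ht₁⟩, rfl⟩ := mem_rect.mp hz₁
  obtain ⟨s₂, t₂, ⟨hs₂, ht₂⟩, rfl⟩ := mem_rect.mp hz₂
  refine mem_rect.mpr ⟨k * s₁ + l * s₂, k * t₁ + l * t₂,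
    ⟨(convex_Icc 0 a) hs₁ hs₂ hk hl hkl, (convex_Icc 0 b) ht₁ ht₂ hk hl hkl⟩, ?_⟩
  have : k • (s₁ • dir ψ + t₁ • dir (ψ + Real.pi/2) + c)
      + l • (s₂ • dir ψ + t₂ • dir (ψ + Real.pi/2) + c)
      = (k * s₁ + l * s₂) • dir ψ + (k * t₁ + l * t₂) • dir (ψ + Real.pi/2) + (k + l) • c := by
    module
  rw [this, hkl, one_smul]

lemma rect_nonempty {a b : ℝ} (ha : 0 < a) (hb : 0 < b) (ψ : ℝ)
    (c : EuclideanSpace ℝ (Fin 2)) : (rect a b ψ c).Nonempty :=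
  ⟨c, mem_rect.mpr ⟨0, 0, ⟨⟨le_refl _, ha.le⟩, ⟨le_refl _, hb.le⟩⟩, by simp⟩⟩


lemma var_ineq {A : Set (EuclideanSpace ℝ (Fin 2))} (hA : Convex ℝ A)
    {p q : EuclideanSpace ℝ (Fin 2)} (hp : p ∈ A)
    (hmin : ∀ z ∈ A, dist p q ≤ dist z q) :
    ∀ z ∈ A, ⟪q - p, z - p⟫ ≤ 0 := by
  intro z hz
  by_contra h
  push_neg at h
  set I : ℝ := ⟪q - p, z - p⟫ with hI
  have hzp : z - p ≠ 0 := by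
    intro h0
    rw [hI, h0, inner_zero_right] at h
    exact lt_irrefl _ h
  have hN : (0:ℝ) < ‖z - p‖ ^ 2 := pow_pos (norm_pos_iff.mpr hzp) 2
  set N : ℝ := ‖z - p‖ ^ 2 with hNdef
  set t : ℝ := min 1 (I / N) with htdef
  have ht0 : 0 < t := lt_min one_pos (div_pos h hN)
  have ht1 : t ≤ 1 := min_le_left _ _
  have htI : t * N ≤ I := by
    calc t * N ≤ (I / N) * N := by
          exact mul_le_mul_of_nonneg_right (min_le_right _ _) hN.le
    _ = I := by field_simp
  have hz' : p + t • (z - p) ∈ A := by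
    have he : p + t • (z - p) = (1 - t) • p + t • z := by module
    rw [he]
    exact hA hp hz (by linarith) ht0.le (by ring)
  have hd := hmin _ hz'
  rw [dist_eq_norm, dist_eq_norm] at hd
  have hsq : ‖p - q‖ ^ 2 ≤ ‖p + t • (z - p) - q‖ ^ 2 := by
    have h1 : (0:ℝ) ≤ ‖p - q‖ := norm_nonneg _
    nlinarith [norm_nonneg (p + t • (z - p) - q)]
  have hexp : ‖p + t • (z - p) - q‖ ^ 2
      = ‖p - q‖ ^ 2 + 2 * (t * (-I)) + t ^ 2 * N := by
    have he : p + t • (z - p) - q = (p - q) + t • (z - p) := by abel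
    rw [he, @norm_add_sq_real, real_inner_smul_right]
    have : ⟪p - q, z - p⟫ = -I := by
      rw [hI, ← inner_neg_left, neg_sub]
    rw [this, norm_smul]
    simp [abs_of_pos ht0]
    ring
  rw [hexp] at hsq
  have h2I : 2 * I ≤ t * N := by
    have : 0 ≤ -2 * (t * I) + t ^ 2 * N := by linarith
    have h3 : t * (2 * I) ≤ t * (t * N) := by nlinarith
    exact le_of_mul_le_mul_left h3 ht0
  linarith

lemma actA {C v x a : ℝ} (hx : x ∈ Set.Icc 0 a) (hm : C = 0 ∨ 0 < v * C)
    (H : ∀ x'' ∈ Set.Icc (0:ℝ) a, x'' * v ≤ x * v) :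
    ∀ x'' ∈ Set.Icc (0:ℝ) a, x'' * C ≤ x * C := by
  intro x'' hx''
  rcases hm with hm | hm
  · simp [hm]
  rcases lt_trichotomy C 0 with hC | hC | hC
  · have hv : v < 0 := by nlinarith
    have hx0 : x = 0 := by
      have := H 0 ⟨le_refl _, hx.1.trans hx.2⟩
      simp at this
      nlinarith [hx.1]
    rw [hx0]
    nlinarith [hx''.1]
  · simp [hC]
  · have hv : 0 < v := by nlinarith
    have hxa : x = a := by
      have := H a ⟨hx.1.trans hx.2, le_refl _⟩
      have h2 : a ≤ x := by nlinarith
      linarith [hx.2]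
    rw [hxa]
    nlinarith [hx''.2]

lemma actB {C v s a : ℝ} (hs : s ∈ Set.Icc 0 a) (hm : C = 0 ∨ 0 < v * C)
    (H : ∀ s'' ∈ Set.Icc (0:ℝ) a, s * v ≤ s'' * v) :
    ∀ s'' ∈ Set.Icc (0:ℝ) a, s * C ≤ s'' * C := by
  intro s'' hs''
  rcases hm with hm | hm
  · simp [hm]
  rcases lt_trichotomy C 0 with hC | hC | hC
  · have hv : v < 0 := by nlinarith
    have hsa : s = a := by
      have := H a ⟨hs.1.trans hs.2, le_refl _⟩
      have : a ≤ s := by nlinarith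
      linarith [hs.2]
    rw [hsa]
    nlinarith [hs''.2]
  · simp [hC]
  · have hv : 0 < v := by nlinarith
    have hs0 : s = 0 := by
      have := H 0 ⟨le_refl _, hs.1.trans hs.2⟩
      simp at this
      nlinarith [hs.1]
    rw [hs0]
    nlinarith [hs''.1]

set_option maxHeartbeats 3000000 in
lemma core {α β γ δ c s : ℝ} (hγ : γ = α * c - β * s) (hδ : δ = α * s + β * c)
    (hcs : c ^ 2 + s ^ 2 = 1) (hw : α ≠ 0 ∨ β ≠ 0) :
    (0 < α ∧ (c = 0 ∨ 0 < γ * c) ∧ (s = 0 ∨ 0 < δ * s)) ∨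
    (α < 0 ∧ (-c = 0 ∨ 0 < γ * -c) ∧ (-s = 0 ∨ 0 < δ * -s)) ∨
    (0 < β ∧ (-s = 0 ∨ 0 < γ * -s) ∧ (c = 0 ∨ 0 < δ * c)) ∨
    (β < 0 ∧ (s = 0 ∨ 0 < γ * s) ∧ (-c = 0 ∨ 0 < δ * -c)) ∨
    (0 < γ ∧ (c = 0 ∨ 0 < α * c) ∧ (-s = 0 ∨ 0 < β * -s)) ∨
    (γ < 0 ∧ (-c = 0 ∨ 0 < α * -c) ∧ (s = 0 ∨ 0 < β * s)) ∨
    (0 < δ ∧ (s = 0 ∨ 0 < α * s) ∧ (c = 0 ∨ 0 < β * c)) ∨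
    (δ < 0 ∧ (-s = 0 ∨ 0 < α * -s) ∧ (-c = 0 ∨ 0 < β * -c)) := by
  subst hγ hδ
  rcases lt_trichotomy c 0 with hc | hc | hc
  · rcases lt_trichotomy s 0 with hs | hs | hs
    · -- c<0 s<0
      rcases lt_trichotomy α 0 with ha | ha | ha
      · rcases lt_trichotomy β 0 with hb | hb | hb
        · have phc : 0 < -c := by linarith
          have phs : 0 < -s := by linarith
          have pha : 0 < -α := by linarith
          have phb : 0 < -β := by linarith
          exact Or.inr (Or.inr (Or.inr (Or.inr (Or.inr (Or.inr (Or.inl ⟨by nlinarith [mul_pos pha phs, mul_pos phb phc], Or.inr (by nlinarith [mul_pos phs pha]), Or.inr (by nlinarith [mul_pos phc phb])⟩))))))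
        · subst hb
          have phc : 0 < -c := by linarith
          have phs : 0 < -s := by linarith
          have pha : 0 < -α := by linarith
          exact Or.inr (Or.inl ⟨ha, Or.inr (by nlinarith [mul_pos (mul_pos phc phc) pha]), Or.inr (by nlinarith [mul_pos (mul_pos phs phs) pha])⟩)
        · have phc : 0 < -c := by linarith
          have phs : 0 < -s := by linarith
          have pha : 0 < -α := by linarith
          have phb : 0 < β := hb
          exact Or.inr (Or.inr (Or.inr (Or.inr (Or.inl ⟨by nlinarith [mul_pos pha phc, mul_pos phb phs], Or.inr (by nlinarith [mul_pos phc pha]), Or.inr (by nlinarith [mul_pos phs phb])⟩))))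
      · subst ha
        rcases lt_trichotomy β 0 with hb | hb | hb
        · have phc : 0 < -c := by linarith
          have phs : 0 < -s := by linarith
          have phb : 0 < -β := by linarith
          exact Or.inr (Or.inr (Or.inr (Or.inl ⟨hb, Or.inr (by nlinarith [mul_pos (mul_pos phs phs) phb]), Or.inr (by nlinarith [mul_pos (mul_pos phc phc) phb])⟩)))
        · subst hb; simp at hw
        · have phc : 0 < -c := by linarith
          have phs : 0 < -s := by linarith
          have phb : 0 < β := hb
          exact Or.inr (Or.inr (Or.inl ⟨hb, Or.inr (by nlinarith [mul_pos (mul_pos phs phs) phb]), Or.inr (by nlinarith [mul_pos (mul_pos phc phc) phb])⟩))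
      · rcases lt_trichotomy β 0 with hb | hb | hb
        · have phc : 0 < -c := by linarith
          have phs : 0 < -s := by linarith
          have pha : 0 < α := ha
          have phb : 0 < -β := by linarith
          exact Or.inr (Or.inr (Or.inr (Or.inr (Or.inr (Or.inl ⟨by nlinarith [mul_pos pha phc, mul_pos phb phs], Or.inr (by nlinarith [mul_pos phc pha]), Or.inr (by nlinarith [mul_pos phs phb])⟩)))))
        · subst hb
          have phc : 0 < -c := by linarith
          have phs : 0 < -s := by linarith
          have pha : 0 < α := ha
          exact Or.inl ⟨ha, Or.inr (by nlinarith [mul_pos (mul_pos phc phc) pha]), Or.inr (by nlinarith [mul_pos (mul_pos phs phs) pha])⟩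
        · have phc : 0 < -c := by linarith
          have phs : 0 < -s := by linarith
          have pha : 0 < α := ha
          have phb : 0 < β := hb
          exact Or.inr (Or.inr (Or.inr (Or.inr (Or.inr (Or.inr (Or.inr (⟨by nlinarith [mul_pos pha phs, mul_pos phb phc], Or.inr (by nlinarith [mul_pos phs pha]), Or.inr (by nlinarith [mul_pos phc phb])⟩)))))))
    · subst hs
      rcases lt_trichotomy α 0 with ha | ha | ha
      · have phc : 0 < -c := by linarith
        have pha : 0 < -α := by linarith
        exact Or.inr (Or.inl ⟨ha, Or.inr (by nlinarith [mul_pos (mul_pos phc phc) pha]), Or.inl (by norm_num)⟩)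
      · subst ha
        rcases lt_trichotomy β 0 with hb | hb | hb
        · have phc : 0 < -c := by linarith
          have phb : 0 < -β := by linarith
          exact Or.inr (Or.inr (Or.inr (Or.inl ⟨hb, Or.inl (by norm_num), Or.inr (by nlinarith [mul_pos (mul_pos phc phc) phb])⟩)))
        · subst hb; simp at hw
        · have phc : 0 < -c := by linarith
          have phb : 0 < β := hb
          exact Or.inr (Or.inr (Or.inl ⟨hb, Or.inl (by norm_num), Or.inr (by nlinarith [mul_pos (mul_pos phc phc) phb])⟩))
      · have phc : 0 < -c := by linarith
        have pha : 0 < α := ha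
        exact Or.inl ⟨ha, Or.inr (by nlinarith [mul_pos (mul_pos phc phc) pha]), Or.inl (by norm_num)⟩
    · -- c<0 s>0
      rcases lt_trichotomy α 0 with ha | ha | ha
      · rcases lt_trichotomy β 0 with hb | hb | hb
        · have phc : 0 < -c := by linarith
          have phs : 0 < s := hs
          have pha : 0 < -α := by linarith
          have phb : 0 < -β := by linarith
          exact Or.inr (Or.inr (Or.inr (Or.inr (Or.inl ⟨by nlinarith [mul_pos pha phc, mul_pos phb phs], Or.inr (by nlinarith [mul_pos phc pha]), Or.inr (by nlinarith [mul_pos phs phb])⟩))))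
        · subst hb
          have phc : 0 < -c := by linarith
          have phs : 0 < s := hs
          have pha : 0 < -α := by linarith
          exact Or.inr (Or.inl ⟨ha, Or.inr (by nlinarith [mul_pos (mul_pos phc phc) pha]), Or.inr (by nlinarith [mul_pos (mul_pos phs phs) pha])⟩)
        · have phc : 0 < -c := by linarith
          have phs : 0 < s := hs
          have pha : 0 < -α := by linarith
          have phb : 0 < β := hb
          exact Or.inr (Or.inr (Or.inr (Or.inr (Or.inr (Or.inr (Or.inr (⟨by nlinarith [mul_pos pha phs, mul_pos phb phc], Or.inr (by nlinarith [mul_pos phs pha]), Or.inr (by nlinarith [mul_pos phc phb])⟩)))))))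
      · subst ha
        rcases lt_trichotomy β 0 with hb | hb | hb
        · have phc : 0 < -c := by linarith
          have phs : 0 < s := hs
          have phb : 0 < -β := by linarith
          exact Or.inr (Or.inr (Or.inr (Or.inl ⟨hb, Or.inr (by nlinarith [mul_pos (mul_pos phs phs) phb]), Or.inr (by nlinarith [mul_pos (mul_pos phc phc) phb])⟩)))
        · subst hb; simp at hw
        · have phc : 0 < -c := by linarith
          have phs : 0 < s := hs
          have phb : 0 < β := hb
          exact Or.inr (Or.inr (Or.inl ⟨hb, Or.inr (by nlinarith [mul_pos (mul_pos phs phs) phb]), Or.inr (by nlinarith [mul_pos (mul_pos phc phc) phb])⟩))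
      · rcases lt_trichotomy β 0 with hb | hb | hb
        · have phc : 0 < -c := by linarith
          have phs : 0 < s := hs
          have pha : 0 < α := ha
          have phb : 0 < -β := by linarith
          exact Or.inr (Or.inr (Or.inr (Or.inr (Or.inr (Or.inr (Or.inl ⟨by nlinarith [mul_pos pha phs, mul_pos phb phc], Or.inr (by nlinarith [mul_pos phs pha]), Or.inr (by nlinarith [mul_pos phc phb])⟩))))))
        · subst hb
          have phc : 0 < -c := by linarith
          have phs : 0 < s := hs
          have pha : 0 < α := ha
          exact Or.inl ⟨ha, Or.inr (by nlinarith [mul_pos (mul_pos phc phc) pha]), Or.inr (by nlinarith [mul_pos (mul_pos phs phs) pha])⟩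
        · have phc : 0 < -c := by linarith
          have phs : 0 < s := hs
          have pha : 0 < α := ha
          have phb : 0 < β := hb
          exact Or.inr (Or.inr (Or.inr (Or.inr (Or.inr (Or.inl ⟨by nlinarith [mul_pos pha phc, mul_pos phb phs], Or.inr (by nlinarith [mul_pos phc pha]), Or.inr (by nlinarith [mul_pos phs phb])⟩)))))
  · subst hc
    rcases lt_trichotomy s 0 with hs | hs | hs
    · -- c=0 s<0
      rcases lt_trichotomy α 0 with ha | ha | ha
      · have phs : 0 < -s := by linarith
        have pha : 0 < -α := by linarith
        exact Or.inr (Or.inl ⟨ha, Or.inl (by norm_num), Or.inr (by nlinarith [mul_pos (mul_pos phs phs) pha])⟩)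
      · subst ha
        rcases lt_trichotomy β 0 with hb | hb | hb
        · have phs : 0 < -s := by linarith
          have phb : 0 < -β := by linarith
          exact Or.inr (Or.inr (Or.inr (Or.inl ⟨hb, Or.inr (by nlinarith [mul_pos (mul_pos phs phs) phb]), Or.inl (by norm_num)⟩)))
        · subst hb; simp at hw
        · have phs : 0 < -s := by linarith
          have phb : 0 < β := hb
          exact Or.inr (Or.inr (Or.inl ⟨hb, Or.inr (by nlinarith [mul_pos (mul_pos phs phs) phb]), Or.inl (by norm_num)⟩))
      · have phs : 0 < -s := by linarith
        have pha : 0 < α := ha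
        exact Or.inl ⟨ha, Or.inl (by norm_num), Or.inr (by nlinarith [mul_pos (mul_pos phs phs) pha])⟩
    · subst hs; norm_num at hcs
    · -- c=0 s>0
      rcases lt_trichotomy α 0 with ha | ha | ha
      · have phs : 0 < s := hs
        have pha : 0 < -α := by linarith
        exact Or.inr (Or.inl ⟨ha, Or.inl (by norm_num), Or.inr (by nlinarith [mul_pos (mul_pos phs phs) pha])⟩)
      · subst ha
        rcases lt_trichotomy β 0 with hb | hb | hb
        · have phs : 0 < s := hs
          have phb : 0 < -β := by linarith
          exact Or.inr (Or.inr (Or.inr (Or.inl ⟨hb, Or.inr (by nlinarith [mul_pos (mul_pos phs phs) phb]), Or.inl (by norm_num)⟩)))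
        · subst hb; simp at hw
        · have phs : 0 < s := hs
          have phb : 0 < β := hb
          exact Or.inr (Or.inr (Or.inl ⟨hb, Or.inr (by nlinarith [mul_pos (mul_pos phs phs) phb]), Or.inl (by norm_num)⟩))
      · have phs : 0 < s := hs
        have pha : 0 < α := ha
        exact Or.inl ⟨ha, Or.inl (by norm_num), Or.inr (by nlinarith [mul_pos (mul_pos phs phs) pha])⟩
  · rcases lt_trichotomy s 0 with hs | hs | hs
    · -- c>0 s<0
      rcases lt_trichotomy α 0 with ha | ha | ha
      · rcases lt_trichotomy β 0 with hb | hb | hb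
        · have phc : 0 < c := hc
          have phs : 0 < -s := by linarith
          have pha : 0 < -α := by linarith
          have phb : 0 < -β := by linarith
          exact Or.inr (Or.inr (Or.inr (Or.inr (Or.inr (Or.inl ⟨by nlinarith [mul_pos pha phc, mul_pos phb phs], Or.inr (by nlinarith [mul_pos phc pha]), Or.inr (by nlinarith [mul_pos phs phb])⟩)))))
        · subst hb
          have phc : 0 < c := hc
          have phs : 0 < -s := by linarith
          have pha : 0 < -α := by linarith
          exact Or.inr (Or.inl ⟨ha, Or.inr (by nlinarith [mul_pos (mul_pos phc phc) pha]), Or.inr (by nlinarith [mul_pos (mul_pos phs phs) pha])⟩)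
        · have phc : 0 < c := hc
          have phs : 0 < -s := by linarith
          have pha : 0 < -α := by linarith
          have phb : 0 < β := hb
          exact Or.inr (Or.inr (Or.inr (Or.inr (Or.inr (Or.inr (Or.inl ⟨by nlinarith [mul_pos pha phs, mul_pos phb phc], Or.inr (by nlinarith [mul_pos phs pha]), Or.inr (by nlinarith [mul_pos phc phb])⟩))))))
      · subst ha
        rcases lt_trichotomy β 0 with hb | hb | hb
        · have phc : 0 < c := hc
          have phs : 0 < -s := by linarith
          have phb : 0 < -β := by linarith
          exact Or.inr (Or.inr (Or.inr (Or.inl ⟨hb, Or.inr (by nlinarith [mul_pos (mul_pos phs phs) phb]), Or.inr (by nlinarith [mul_pos (mul_pos phc phc) phb])⟩)))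
        · subst hb; simp at hw
        · have phc : 0 < c := hc
          have phs : 0 < -s := by linarith
          have phb : 0 < β := hb
          exact Or.inr (Or.inr (Or.inl ⟨hb, Or.inr (by nlinarith [mul_pos (mul_pos phs phs) phb]), Or.inr (by nlinarith [mul_pos (mul_pos phc phc) phb])⟩))
      · rcases lt_trichotomy β 0 with hb | hb | hb
        · have phc : 0 < c := hc
          have phs : 0 < -s := by linarith
          have pha : 0 < α := ha
          have phb : 0 < -β := by linarith
          exact Or.inr (Or.inr (Or.inr (Or.inr (Or.inr (Or.inr (Or.inr (⟨by nlinarith [mul_pos pha phs, mul_pos phb phc], Or.inr (by nlinarith [mul_pos phs pha]), Or.inr (by nlinarith [mul_pos phc phb])⟩)))))))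
        · subst hb
          have phc : 0 < c := hc
          have phs : 0 < -s := by linarith
          have pha : 0 < α := ha
          exact Or.inl ⟨ha, Or.inr (by nlinarith [mul_pos (mul_pos phc phc) pha]), Or.inr (by nlinarith [mul_pos (mul_pos phs phs) pha])⟩
        · have phc : 0 < c := hc
          have phs : 0 < -s := by linarith
          have pha : 0 < α := ha
          have phb : 0 < β := hb
          exact Or.inr (Or.inr (Or.inr (Or.inr (Or.inl ⟨by nlinarith [mul_pos pha phc, mul_pos phb phs], Or.inr (by nlinarith [mul_pos phc pha]), Or.inr (by nlinarith [mul_pos phs phb])⟩))))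
    · subst hs
      rcases lt_trichotomy α 0 with ha | ha | ha
      · have phc : 0 < c := hc
        have pha : 0 < -α := by linarith
        exact Or.inr (Or.inl ⟨ha, Or.inr (by nlinarith [mul_pos (mul_pos phc phc) pha]), Or.inl (by norm_num)⟩)
      · subst ha
        rcases lt_trichotomy β 0 with hb | hb | hb
        · have phc : 0 < c := hc
          have phb : 0 < -β := by linarith
          exact Or.inr (Or.inr (Or.inr (Or.inl ⟨hb, Or.inl (by norm_num), Or.inr (by nlinarith [mul_pos (mul_pos phc phc) phb])⟩)))
        · subst hb; simp at hw
        · have phc : 0 < c := hc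
          have phb : 0 < β := hb
          exact Or.inr (Or.inr (Or.inl ⟨hb, Or.inl (by norm_num), Or.inr (by nlinarith [mul_pos (mul_pos phc phc) phb])⟩))
      · have phc : 0 < c := hc
        have pha : 0 < α := ha
        exact Or.inl ⟨ha, Or.inr (by nlinarith [mul_pos (mul_pos phc phc) pha]), Or.inl (by norm_num)⟩
    · -- c>0 s>0
      rcases lt_trichotomy α 0 with ha | ha | ha
      · rcases lt_trichotomy β 0 with hb | hb | hb
        · have phc : 0 < c := hc
          have phs : 0 < s := hs
          have pha : 0 < -α := by linarith
          have phb : 0 < -β := by linarith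
          exact Or.inr (Or.inr (Or.inr (Or.inr (Or.inr (Or.inr (Or.inr (⟨by nlinarith [mul_pos pha phs, mul_pos phb phc], Or.inr (by nlinarith [mul_pos phs pha]), Or.inr (by nlinarith [mul_pos phc phb])⟩)))))))
        · subst hb
          have phc : 0 < c := hc
          have phs : 0 < s := hs
          have pha : 0 < -α := by linarith
          exact Or.inr (Or.inl ⟨ha, Or.inr (by nlinarith [mul_pos (mul_pos phc phc) pha]), Or.inr (by nlinarith [mul_pos (mul_pos phs phs) pha])⟩)
        · have phc : 0 < c := hc
          have phs : 0 < s := hs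
          have pha : 0 < -α := by linarith
          have phb : 0 < β := hb
          exact Or.inr (Or.inr (Or.inr (Or.inr (Or.inr (Or.inl ⟨by nlinarith [mul_pos pha phc, mul_pos phb phs], Or.inr (by nlinarith [mul_pos phc pha]), Or.inr (by nlinarith [mul_pos phs phb])⟩)))))
      · subst ha
        rcases lt_trichotomy β 0 with hb | hb | hb
        · have phc : 0 < c := hc
          have phs : 0 < s := hs
          have phb : 0 < -β := by linarith
          exact Or.inr (Or.inr (Or.inr (Or.inl ⟨hb, Or.inr (by nlinarith [mul_pos (mul_pos phs phs) phb]), Or.inr (by nlinarith [mul_pos (mul_pos phc phc) phb])⟩)))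
        · subst hb; simp at hw
        · have phc : 0 < c := hc
          have phs : 0 < s := hs
          have phb : 0 < β := hb
          exact Or.inr (Or.inr (Or.inl ⟨hb, Or.inr (by nlinarith [mul_pos (mul_pos phs phs) phb]), Or.inr (by nlinarith [mul_pos (mul_pos phc phc) phb])⟩))
      · rcases lt_trichotomy β 0 with hb | hb | hb
        · have phc : 0 < c := hc
          have phs : 0 < s := hs
          have pha : 0 < α := ha
          have phb : 0 < -β := by linarith
          exact Or.inr (Or.inr (Or.inr (Or.inr (Or.inl ⟨by nlinarith [mul_pos pha phc, mul_pos phb phs], Or.inr (by nlinarith [mul_pos phc pha]), Or.inr (by nlinarith [mul_pos phs phb])⟩))))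
        · subst hb
          have phc : 0 < c := hc
          have phs : 0 < s := hs
          have pha : 0 < α := ha
          exact Or.inl ⟨ha, Or.inr (by nlinarith [mul_pos (mul_pos phc phc) pha]), Or.inr (by nlinarith [mul_pos (mul_pos phs phs) pha])⟩
        · have phc : 0 < c := hc
          have phs : 0 < s := hs
          have pha : 0 < α := ha
          have phb : 0 < β := hb
          exact Or.inr (Or.inr (Or.inr (Or.inr (Or.inr (Or.inr (Or.inl ⟨by nlinarith [mul_pos pha phs, mul_pos phb phc], Or.inr (by nlinarith [mul_pos phs pha]), Or.inr (by nlinarith [mul_pos phc phb])⟩))))))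

lemma sep {a₁ b₁ a₂ b₂ ψ₁ ψ₂ x y s t : ℝ} {c₁ c₂ p q : EuclideanSpace ℝ (Fin 2)}
    (hx : x ∈ Set.Icc 0 a₁) (hy : y ∈ Set.Icc 0 b₁)
    (hs : s ∈ Set.Icc 0 a₂) (ht : t ∈ Set.Icc 0 b₂)
    (hpe : p = x • dir ψ₁ + y • dir (ψ₁ + Real.pi/2) + c₁)
    (hqe : q = s • dir ψ₂ + t • dir (ψ₂ + Real.pi/2) + c₂)
    (n : EuclideanSpace ℝ (Fin 2))
    (hpos : 0 < ⟪q, n⟫ - ⟪p, n⟫)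
    (hA1 : ∀ x'' ∈ Set.Icc (0:ℝ) a₁, x'' * ⟪dir ψ₁, n⟫ ≤ x * ⟪dir ψ₁, n⟫)
    (hA2 : ∀ y'' ∈ Set.Icc (0:ℝ) b₁,
      y'' * ⟪dir (ψ₁ + Real.pi/2), n⟫ ≤ y * ⟪dir (ψ₁ + Real.pi/2), n⟫)
    (hB1 : ∀ s'' ∈ Set.Icc (0:ℝ) a₂, s * ⟪dir ψ₂, n⟫ ≤ s'' * ⟪dir ψ₂, n⟫)
    (hB2 : ∀ t'' ∈ Set.Icc (0:ℝ) b₂,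
      t * ⟪dir (ψ₂ + Real.pi/2), n⟫ ≤ t'' * ⟪dir (ψ₂ + Real.pi/2), n⟫) :
    ∀ z₁ ∈ rect a₁ b₁ ψ₁ c₁, ∀ z₂ ∈ rect a₂ b₂ ψ₂ c₂, ⟪z₁, n⟫ < ⟪z₂, n⟫ := by
  intro z₁ hz₁ z₂ hz₂
  obtain ⟨x'', y'', ⟨hx'', hy''⟩, rfl⟩ := mem_rect.mp hz₁
  obtain ⟨s'', t'', ⟨hs'', ht''⟩, rfl⟩ := mem_rect.mp hz₂
  rw [hpe, hqe] at hpos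
  simp only [inner_add_left, real_inner_smul_left] at hpos ⊢
  have h1 := hA1 x'' hx''
  have h2 := hA2 y'' hy''
  have h3 := hB1 s'' hs''
  have h4 := hB2 t'' ht''
  linarith

lemma img_disj {S T : Set (EuclideanSpace ℝ (Fin 2))} {f : EuclideanSpace ℝ (Fin 2) → ℝ}
    (h : ∀ z₁ ∈ S, ∀ z₂ ∈ T, f z₁ < f z₂) : Disjoint (f '' S) (f '' T) := by
  rw [Set.disjoint_left]
  rintro r ⟨z₁, h₁, rfl⟩ ⟨z₂, h₂, he⟩
  exact absurd he (ne_of_gt (h z₁ h₁ z₂ h₂))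

lemma img_disj_neg {S T : Set (EuclideanSpace ℝ (Fin 2))} {u : EuclideanSpace ℝ (Fin 2)}
    (h : ∀ z₁ ∈ S, ∀ z₂ ∈ T, ⟪z₁, -u⟫ < ⟪z₂, -u⟫) :
    Disjoint ((fun x => ⟪x, u⟫) '' S) ((fun x => ⟪x, u⟫) '' T) := by
  refine Disjoint.symm (img_disj ?_)
  intro z₂ h₂ z₁ h₁
  have h3 := h z₁ h₁ z₂ h₂
  rw [inner_neg_right, inner_neg_right] at h3
  linarith

set_option maxHeartbeats 1000000 in
/-- SAT for two rectangles: they are disjoint iff their projections onto one of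
the four edge-normal directions of the two rectangles are disjoint. -/
theorem rect_disjoint_iff_separating_axis
    (a₁ b₁ a₂ b₂ ψ₁ ψ₂ : ℝ) (ha₁ : 0 < a₁) (hb₁ : 0 < b₁) (ha₂ : 0 < a₂) (hb₂ : 0 < b₂)
    (c₁ c₂ : EuclideanSpace ℝ (Fin 2)) :
    Disjoint (rect a₁ b₁ ψ₁ c₁) (rect a₂ b₂ ψ₂ c₂) ↔
      ∃ u ∈ ({dir ψ₁, dir (ψ₁ + Real.pi / 2), dir ψ₂, dir (ψ₂ + Real.pi / 2)} :
          Set (EuclideanSpace ℝ (Fin 2))),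
        Disjoint ((fun x => ⟪x, u⟫) '' rect a₁ b₁ ψ₁ c₁)
          ((fun x => ⟪x, u⟫) '' rect a₂ b₂ ψ₂ c₂) := by
  constructor
  · intro hdisj
    have hAc : IsCompact (rect a₁ b₁ ψ₁ c₁) := isCompact_rect _ _ _ _
    have hBc : IsCompact (rect a₂ b₂ ψ₂ c₂) := isCompact_rect _ _ _ _
    have hAconv := convex_rect a₁ b₁ ψ₁ c₁
    have hBconv := convex_rect a₂ b₂ ψ₂ c₂
    have hAne := rect_nonempty ha₁ hb₁ ψ₁ c₁
    have hBne := rect_nonempty ha₂ hb₂ ψ₂ c₂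
    obtain ⟨⟨p, q⟩, hpq, hmin'⟩ := (hAc.prod hBc).exists_isMinOn (hAne.prod hBne)
      (continuous_fst.dist continuous_snd).continuousOn
    rw [isMinOn_iff] at hmin'
    have hmin : ∀ z ∈ (rect a₁ b₁ ψ₁ c₁) ×ˢ (rect a₂ b₂ ψ₂ c₂), dist p q ≤ dist z.1 z.2 :=
      fun z hz => hmin' z hz
    have hp : p ∈ rect a₁ b₁ ψ₁ c₁ := hpq.1
    have hq : q ∈ rect a₂ b₂ ψ₂ c₂ := hpq.2
    have hminA : ∀ z ∈ rect a₁ b₁ ψ₁ c₁, dist p q ≤ dist z q := fun z hz =>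
      hmin (z, q) ⟨hz, hq⟩
    have hminB : ∀ z ∈ rect a₂ b₂ ψ₂ c₂, dist q p ≤ dist z p := fun z hz => by
      rw [dist_comm q p, dist_comm z p]; exact hmin (p, z) ⟨hp, hz⟩
    have hvA := var_ineq hAconv hp hminA
    have hvB := var_ineq hBconv hq hminB
    obtain ⟨x, y, ⟨hx, hy⟩, hpe⟩ := mem_rect.mp hp
    obtain ⟨s, t, ⟨hs, ht⟩, hqe⟩ := mem_rect.mp hq
    have E1 : ⟪dir ψ₁, dir ψ₁⟫ = 1 := by rw [inner_dir, sub_self, Real.cos_zero]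
    have E2 : ⟪dir (ψ₁ + Real.pi/2), dir (ψ₁ + Real.pi/2)⟫ = 1 := by
      rw [inner_dir, sub_self, Real.cos_zero]
    have E3 : ⟪dir ψ₂, dir ψ₂⟫ = 1 := by rw [inner_dir, sub_self, Real.cos_zero]
    have E4 : ⟪dir (ψ₂ + Real.pi/2), dir (ψ₂ + Real.pi/2)⟫ = 1 := by
      rw [inner_dir, sub_self, Real.cos_zero]
    have E5 : ⟪dir (ψ₁ + Real.pi/2), dir ψ₁⟫ = 0 := by
      rw [inner_dir, show ψ₁ + Real.pi/2 - ψ₁ = Real.pi/2 by ring, Real.cos_pi_div_two]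
    have E6 : ⟪dir ψ₁, dir (ψ₁ + Real.pi/2)⟫ = 0 := by
      rw [inner_dir, show ψ₁ - (ψ₁ + Real.pi/2) = -(Real.pi/2) by ring, Real.cos_neg,
        Real.cos_pi_div_two]
    have E7 : ⟪dir (ψ₂ + Real.pi/2), dir ψ₂⟫ = 0 := by
      rw [inner_dir, show ψ₂ + Real.pi/2 - ψ₂ = Real.pi/2 by ring, Real.cos_pi_div_two]
    have E8 : ⟪dir ψ₂, dir (ψ₂ + Real.pi/2)⟫ = 0 := by
      rw [inner_dir, show ψ₂ - (ψ₂ + Real.pi/2) = -(Real.pi/2) by ring, Real.cos_neg,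
        Real.cos_pi_div_two]
    have E9 : ⟪dir ψ₁, dir ψ₂⟫ = Real.cos (ψ₁ - ψ₂) := inner_dir _ _
    have E10 : ⟪dir ψ₂, dir ψ₁⟫ = Real.cos (ψ₁ - ψ₂) := by
      rw [inner_dir, show ψ₂ - ψ₁ = -(ψ₁ - ψ₂) by ring, Real.cos_neg]
    have E11 : ⟪dir ψ₁, dir (ψ₂ + Real.pi/2)⟫ = Real.sin (ψ₁ - ψ₂) := by
      rw [inner_dir, show ψ₁ - (ψ₂ + Real.pi/2) = (ψ₁ - ψ₂) - Real.pi/2 by ring,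
        Real.cos_sub_pi_div_two]
    have E12 : ⟪dir (ψ₂ + Real.pi/2), dir ψ₁⟫ = Real.sin (ψ₁ - ψ₂) := by
      rw [inner_dir, show ψ₂ + Real.pi/2 - ψ₁ = -((ψ₁ - ψ₂) - Real.pi/2) by ring,
        Real.cos_neg, Real.cos_sub_pi_div_two]
    have E13 : ⟪dir (ψ₁ + Real.pi/2), dir ψ₂⟫ = -Real.sin (ψ₁ - ψ₂) := by
      rw [inner_dir, show ψ₁ + Real.pi/2 - ψ₂ = (ψ₁ - ψ₂) + Real.pi/2 by ring,
        Real.cos_add_pi_div_two]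
    have E14 : ⟪dir ψ₂, dir (ψ₁ + Real.pi/2)⟫ = -Real.sin (ψ₁ - ψ₂) := by
      rw [inner_dir, show ψ₂ - (ψ₁ + Real.pi/2) = -((ψ₁ - ψ₂) + Real.pi/2) by ring,
        Real.cos_neg, Real.cos_add_pi_div_two]
    have E15 : ⟪dir (ψ₁ + Real.pi/2), dir (ψ₂ + Real.pi/2)⟫ = Real.cos (ψ₁ - ψ₂) := by
      rw [inner_dir, show ψ₁ + Real.pi/2 - (ψ₂ + Real.pi/2) = ψ₁ - ψ₂ by ring]
    have E16 : ⟪dir (ψ₂ + Real.pi/2), dir (ψ₁ + Real.pi/2)⟫ = Real.cos (ψ₁ - ψ₂) := by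
      rw [inner_dir, show ψ₂ + Real.pi/2 - (ψ₁ + Real.pi/2) = -(ψ₁ - ψ₂) by ring, Real.cos_neg]
    -- KKT conditions
    have hKx : ∀ x'' ∈ Set.Icc (0:ℝ) a₁,
        x'' * ⟪q - p, dir ψ₁⟫ ≤ x * ⟪q - p, dir ψ₁⟫ := by
      intro x'' hx''
      have h := hvA _ (mem_rect.mpr ⟨x'', y, ⟨hx'', hy⟩, rfl⟩)
      have he : x'' • dir ψ₁ + y • dir (ψ₁ + Real.pi/2) + c₁ - p = (x'' - x) • dir ψ₁ := by
        rw [hpe]; module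
      rw [he, real_inner_smul_right] at h
      nlinarith [h]
    have hKy : ∀ y'' ∈ Set.Icc (0:ℝ) b₁,
        y'' * ⟪q - p, dir (ψ₁ + Real.pi/2)⟫ ≤ y * ⟪q - p, dir (ψ₁ + Real.pi/2)⟫ := by
      intro y'' hy''
      have h := hvA _ (mem_rect.mpr ⟨x, y'', ⟨hx, hy''⟩, rfl⟩)
      have he : x • dir ψ₁ + y'' • dir (ψ₁ + Real.pi/2) + c₁ - p
          = (y'' - y) • dir (ψ₁ + Real.pi/2) := by
        rw [hpe]; module
      rw [he, real_inner_smul_right] at h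
      nlinarith [h]
    have hKs : ∀ s'' ∈ Set.Icc (0:ℝ) a₂,
        s * ⟪q - p, dir ψ₂⟫ ≤ s'' * ⟪q - p, dir ψ₂⟫ := by
      intro s'' hs''
      have h := hvB _ (mem_rect.mpr ⟨s'', t, ⟨hs'', ht⟩, rfl⟩)
      have he : s'' • dir ψ₂ + t • dir (ψ₂ + Real.pi/2) + c₂ - q = (s'' - s) • dir ψ₂ := by
        rw [hqe]; module
      rw [he, real_inner_smul_right] at h
      have hne : ⟪p - q, dir ψ₂⟫ = -⟪q - p, dir ψ₂⟫ := by
        rw [← inner_neg_left, neg_sub]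
      rw [hne] at h
      nlinarith [h]
    have hKt : ∀ t'' ∈ Set.Icc (0:ℝ) b₂,
        t * ⟪q - p, dir (ψ₂ + Real.pi/2)⟫ ≤ t'' * ⟪q - p, dir (ψ₂ + Real.pi/2)⟫ := by
      intro t'' ht''
      have h := hvB _ (mem_rect.mpr ⟨s, t'', ⟨hs, ht''⟩, rfl⟩)
      have he : s • dir ψ₂ + t'' • dir (ψ₂ + Real.pi/2) + c₂ - q
          = (t'' - t) • dir (ψ₂ + Real.pi/2) := by
        rw [hqe]; module
      rw [he, real_inner_smul_right] at h
      have hne : ⟪p - q, dir (ψ₂ + Real.pi/2)⟫ = -⟪q - p, dir (ψ₂ + Real.pi/2)⟫ := by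
        rw [← inner_neg_left, neg_sub]
      rw [hne] at h
      nlinarith [h]
    -- nondegeneracy
    have hqp_ne : q - p ≠ 0 :=
      sub_ne_zero.mpr fun he => Set.disjoint_left.mp hdisj hp (he ▸ hq)
    have hexp := dir_expand ψ₁ (q - p)
    have hab : ⟪q - p, dir ψ₁⟫ ≠ 0 ∨ ⟪q - p, dir (ψ₁ + Real.pi/2)⟫ ≠ 0 := by
      by_contra hcon
      push_neg at hcon
      apply hqp_ne
      rw [hcon.1, hcon.2] at hexp
      simpa using hexp
    have hrelγ : ⟪q - p, dir ψ₂⟫ = ⟪q - p, dir ψ₁⟫ * Real.cos (ψ₁ - ψ₂)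
        - ⟪q - p, dir (ψ₁ + Real.pi/2)⟫ * Real.sin (ψ₁ - ψ₂) := by
      conv_lhs => rw [hexp]
      rw [inner_add_left, real_inner_smul_left, real_inner_smul_left, E9, E13]; ring
    have hrelδ : ⟪q - p, dir (ψ₂ + Real.pi/2)⟫ = ⟪q - p, dir ψ₁⟫ * Real.sin (ψ₁ - ψ₂)
        + ⟪q - p, dir (ψ₁ + Real.pi/2)⟫ * Real.cos (ψ₁ - ψ₂) := by
      conv_lhs => rw [hexp]
      rw [inner_add_left, real_inner_smul_left, real_inner_smul_left, E11, E15]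
    rcases core hrelγ hrelδ (Real.cos_sq_add_sin_sq (ψ₁ - ψ₂)) hab with
      h | h | h | h | h | h | h | h
    · obtain ⟨h1, hm1, hm2⟩ := h
      refine ⟨dir ψ₁, by simp, img_disj (sep hx hy hs ht hpe hqe (dir ψ₁) ?_ ?_ ?_ ?_ ?_)⟩
      · rw [← inner_sub_left]; exact h1
      · refine actA hx ?_ hKx
        rw [E1, mul_one]; exact Or.inr h1
      · exact actA hy (Or.inl E5) hKy
      · refine actB hs ?_ hKs
        rw [E10]; exact hm1
      · refine actB ht ?_ hKt
        rw [E12]; exact hm2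
    · obtain ⟨h1, hm1, hm2⟩ := h
      refine ⟨dir ψ₁, by simp, img_disj_neg (sep hx hy hs ht hpe hqe (-dir ψ₁) ?_ ?_ ?_ ?_ ?_)⟩
      · rw [← inner_sub_left, inner_neg_right]; linarith
      · refine actA hx ?_ hKx
        rw [inner_neg_right, E1]; right; nlinarith
      · refine actA hy ?_ hKy
        rw [inner_neg_right, E5]; left; norm_num
      · refine actB hs ?_ hKs
        rw [inner_neg_right, E10]; exact hm1
      · refine actB ht ?_ hKt
        rw [inner_neg_right, E12]; exact hm2
    · obtain ⟨h1, hm1, hm2⟩ := h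
      refine ⟨dir (ψ₁ + Real.pi/2), by simp,
        img_disj (sep hx hy hs ht hpe hqe (dir (ψ₁ + Real.pi/2)) ?_ ?_ ?_ ?_ ?_)⟩
      · rw [← inner_sub_left]; exact h1
      · exact actA hx (Or.inl E6) hKx
      · refine actA hy ?_ hKy
        rw [E2, mul_one]; exact Or.inr h1
      · refine actB hs ?_ hKs
        rw [E14]; exact hm1
      · refine actB ht ?_ hKt
        rw [E16]; exact hm2
    · obtain ⟨h1, hm1, hm2⟩ := h
      refine ⟨dir (ψ₁ + Real.pi/2), by simp,
        img_disj_neg (sep hx hy hs ht hpe hqe (-dir (ψ₁ + Real.pi/2)) ?_ ?_ ?_ ?_ ?_)⟩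
      · rw [← inner_sub_left, inner_neg_right]; linarith
      · refine actA hx ?_ hKx
        rw [inner_neg_right, E6]; left; norm_num
      · refine actA hy ?_ hKy
        rw [inner_neg_right, E2]; right; nlinarith
      · refine actB hs ?_ hKs
        rw [inner_neg_right, E14, neg_neg]; exact hm1
      · refine actB ht ?_ hKt
        rw [inner_neg_right, E16]; exact hm2
    · obtain ⟨h1, hm1, hm2⟩ := h
      refine ⟨dir ψ₂, by simp, img_disj (sep hx hy hs ht hpe hqe (dir ψ₂) ?_ ?_ ?_ ?_ ?_)⟩
      · rw [← inner_sub_left]; exact h1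
      · refine actA hx ?_ hKx
        rw [E9]; exact hm1
      · refine actA hy ?_ hKy
        rw [E13]; exact hm2
      · refine actB hs ?_ hKs
        rw [E3, mul_one]; exact Or.inr h1
      · exact actB ht (Or.inl E7) hKt
    · obtain ⟨h1, hm1, hm2⟩ := h
      refine ⟨dir ψ₂, by simp, img_disj_neg (sep hx hy hs ht hpe hqe (-dir ψ₂) ?_ ?_ ?_ ?_ ?_)⟩
      · rw [← inner_sub_left, inner_neg_right]; linarith
      · refine actA hx ?_ hKx
        rw [inner_neg_right, E9]; exact hm1
      · refine actA hy ?_ hKy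
        rw [inner_neg_right, E13, neg_neg]; exact hm2
      · refine actB hs ?_ hKs
        rw [inner_neg_right, E3]; right; nlinarith
      · refine actB ht ?_ hKt
        rw [inner_neg_right, E7]; left; norm_num
    · obtain ⟨h1, hm1, hm2⟩ := h
      refine ⟨dir (ψ₂ + Real.pi/2), by simp,
        img_disj (sep hx hy hs ht hpe hqe (dir (ψ₂ + Real.pi/2)) ?_ ?_ ?_ ?_ ?_)⟩
      · rw [← inner_sub_left]; exact h1
      · refine actA hx ?_ hKx
        rw [E11]; exact hm1
      · refine actA hy ?_ hKy
        rw [E15]; exact hm2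
      · exact actB hs (Or.inl E8) hKs
      · refine actB ht ?_ hKt
        rw [E4, mul_one]; exact Or.inr h1
    · obtain ⟨h1, hm1, hm2⟩ := h
      refine ⟨dir (ψ₂ + Real.pi/2), by simp,
        img_disj_neg (sep hx hy hs ht hpe hqe (-dir (ψ₂ + Real.pi/2)) ?_ ?_ ?_ ?_ ?_)⟩
      · rw [← inner_sub_left, inner_neg_right]; linarith
      · refine actA hx ?_ hKx
        rw [inner_neg_right, E11]; exact hm1
      · refine actA hy ?_ hKy
        rw [inner_neg_right, E15]; exact hm2
      · refine actB hs ?_ hKs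
        rw [inner_neg_right, E8]; left; norm_num
      · refine actB ht ?_ hKt
        rw [inner_neg_right, E4]; right; nlinarith
  · rintro ⟨u, _, hdisj⟩
    rw [Set.disjoint_left]
    intro z hz1 hz2
    exact Set.disjoint_left.mp hdisj ⟨z, hz1, rfl⟩ ⟨z, hz2, rfl⟩
end

section
/- Let h: ℝ → ℝ be continuously differentiable with h(0) ≥ 0, and α an extended class-K function that is locally Lipschitz. If h'(t) ≥ −α(h(t)) for all t ≥ 0, then h(t) ≥ 0 for all t ≥ 0. -/
/-- Forward invariance of CBFs along a trajectory with a general locally Lipschitz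
extended class-K function. -/
theorem cbf_forward_invariance_classK (h : ℝ → ℝ) (α : ℝ → ℝ)
    (hC1 : ContDiff ℝ 1 h) (h0 : 0 ≤ h 0)
    (hαcont : Continuous α) (hαmono : StrictMono α) (hα0 : α 0 = 0)
    (hαlip : LocallyLipschitz α)
    (hcond : ∀ t ≥ (0 : ℝ), deriv h t ≥ -α (h t)) :
    ∀ t ≥ (0 : ℝ), 0 ≤ h t := by
  have hcont : Continuous h := hC1.continuous
  by_contra hcon
  push_neg at hcon
  obtain ⟨t₀, ht₀, hneg⟩ := hcon
  -- the set of times in [0, t₀] where h is nonneg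
  set S : Set ℝ := {t | t ∈ Set.Icc (0:ℝ) t₀ ∧ 0 ≤ h t} with hS
  have hSne : S.Nonempty := ⟨0, ⟨le_refl 0, ht₀⟩, h0⟩
  have hSbdd : BddAbove S := ⟨t₀, fun x hx => hx.1.2⟩
  set s := sSup S with hs
  have hSclosed : IsClosed S := by
    have : S = Set.Icc (0:ℝ) t₀ ∩ h ⁻¹' (Set.Ici 0) := by
      ext x; simp [hS, Set.mem_inter_iff]
    rw [this]
    exact isClosed_Icc.inter (isClosed_Ici.preimage hcont)
  have hsS : s ∈ S := hSclosed.csSup_mem hSne hSbdd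
  have hs0 : 0 ≤ s := hsS.1.1
  have hst₀ : s ≤ t₀ := hsS.1.2
  have hhs : 0 ≤ h s := hsS.2
  have hsne : s ≠ t₀ := fun he => absurd hhs (by rw [he]; exact not_le.mpr hneg)
  have hslt : s < t₀ := lt_of_le_of_ne hst₀ hsne
  -- on (s, t₀], h < 0
  have hneg' : ∀ t ∈ Set.Ioc s t₀, h t < 0 := by
    intro t ht
    by_contra hge
    push_neg at hge
    have : t ∈ S := ⟨⟨le_trans hs0 ht.1.le, ht.2⟩, hge⟩
    exact absurd (le_csSup hSbdd this) (not_le.mpr ht.1)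
  -- deriv h > 0 on interior (s, t₀)
  have hmono : StrictMonoOn h (Set.Icc s t₀) := by
    apply strictMonoOn_of_deriv_pos (convex_Icc s t₀) (hcont.continuousOn)
    intro t ht
    rw [interior_Icc] at ht
    have htneg : h t < 0 := hneg' t ⟨ht.1, ht.2.le⟩
    have : α (h t) < 0 := by
      have := hαmono htneg
      rwa [hα0] at this
    have hd := hcond t (le_trans hs0 ht.1.le)
    linarith
  have : h s < h t₀ := hmono ⟨le_refl s, hst₀⟩ ⟨hst₀, le_refl t₀⟩ hslt
  linarith
end
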